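/- arXiv:2207.05416 — 2 statements merged into one kernel-verified Lean document; each statement's English description precedes it below -/
import Mathlib

section
/- Let n ≥ 2, let H be a proper nonzero linear subspace of ℝⁿ and let K ∈ 𝒦ⁿ. Then λₙ(F_H K) ≥ λₙ(K), where F_H is the fiber symmetrization with respect to H and λₙ is n-dimensional Lebesgue measure. -/
/-!
Fiber symmetrization with respect to a hyperplane `eᗮ` replaces each chord `g + A • e` of a
convex body (`g ⊥ e`, `A` an interval) by `g + ½ (A - A) • e`, an interval of the same length,
so by Cavalieri's principle it preserves volume. Symmetrizing `K` successively with respect to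
`e₁ᗮ, …, e_kᗮ` for an orthonormal basis `(eᵢ)` of `Hᗮ` gives a body `S` with `vol S = vol K`
that is invariant under each reflection in `eᵢᗮ`, hence under their product `R_H`; therefore
`S ⊆ F_H S`. Since `F_H (F_L T) ⊆ F_L (F_H T)` whenever `H ≤ L`, the set `F_H S` lies in the
successive symmetrization of `F_H K`, whose volume is `vol (F_H K)`.
-/

open Filter Topology Metric Set Pointwise MeasureTheory

noncomputable section

abbrev Euc (n : ℕ) := EuclideanSpace ℝ (Fin n)

def IsConvexBody {n : ℕ} (K : Set (Euc n)) : Prop :=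
  K.Nonempty ∧ IsCompact K ∧ Convex ℝ K

def reflMap {n : ℕ} (H : Submodule ℝ (Euc n)) : Euc n → Euc n :=
  (H.reflection : Euc n ≃ₗᵢ[ℝ] Euc n)

/-- Fiber symmetrization with respect to the subspace `H`: every fiber `K ∩ (H^⊥ + x)`,
`x ∈ H`, is replaced by its central Minkowski symmetrization within that fiber. -/
def fiber {n : ℕ} (H : Submodule ℝ (Euc n)) (K : Set (Euc n)) : Set (Euc n) :=
  ⋃ x ∈ (H : Set (Euc n)),
    (2⁻¹ : ℝ) • ((K ∩ ((Hᗮ : Set (Euc n)) + {x})) +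
      reflMap H '' (K ∩ ((Hᗮ : Set (Euc n)) + {x})))

open Submodule RealInnerProductSpace

section InnerProductSpace

variable {E : Type*} [NormedAddCommGroup E] [InnerProductSpace ℝ E]

namespace Submodule

theorem reflection_orthogonal_unit_singleton {u : E} (hu : ‖u‖ = 1) (x : E) :
    (ℝ ∙ u)ᗮ.reflection x = x - (2 * ⟪u, x⟫) • u := by
  rw [reflection_orthogonal_apply, reflection_apply, starProjection_unit_singleton ℝ hu]
  module

variable (K : Submodule ℝ E) [K.HasOrthogonalProjection]

theorem reflection_eq_neg_iff {x : E} : K.reflection x = -x ↔ x ∈ Kᗮ := by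
  rw [← reflection_eq_self_iff, reflection_orthogonal_apply, neg_eq_iff_eq_neg]

theorem sub_reflection_mem_orthogonal (x : E) : x - K.reflection x ∈ Kᗮ := by
  have h : x - K.reflection x = (2 : ℝ) • (x - K.starProjection x) := by
    rw [reflection_apply]; module
  rw [h]
  exact smul_mem _ _ (sub_starProjection_mem_orthogonal x)

variable {K}

theorem inv_two_smul_add_reflection_sub_mem_orthogonal {a b : E} (h : a - b ∈ Kᗮ) :
    (2⁻¹ : ℝ) • (a + K.reflection b) - a ∈ Kᗮ := by
  have e : (2⁻¹ : ℝ) • (a + K.reflection b) - a =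
      (2⁻¹ : ℝ) • (-(a - b) - (b - K.reflection b)) := by
    module
  rw [e]
  exact smul_mem _ _ (sub_mem (neg_mem h) (sub_reflection_mem_orthogonal K b))

theorem reflection_reflection_comm_of_le {U V : Submodule ℝ E} [U.HasOrthogonalProjection]
    [V.HasOrthogonalProjection] (h : U ≤ V) (x : E) :
    U.reflection (V.reflection x) = V.reflection (U.reflection x) := by
  have hUV : U.starProjection (V.starProjection x) = U.starProjection x :=
    congrArg (· x) (starProjection_comp_starProjection_of_le h)
  have hVU : V.starProjection (U.starProjection x) = U.starProjection x :=
    starProjection_eq_self_iff.2 (h (starProjection_apply_mem U x))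
  simp only [reflection_apply, map_sub, map_nsmul, hUV, hVU]
  module

theorem reflection_orthogonal_singleton_comm {u v : E} (h : ⟪u, v⟫ = 0) (x : E) :
    (ℝ ∙ u)ᗮ.reflection ((ℝ ∙ v)ᗮ.reflection x) = (ℝ ∙ v)ᗮ.reflection ((ℝ ∙ u)ᗮ.reflection x) := by
  have hle : ℝ ∙ u ≤ (ℝ ∙ v)ᗮ :=
    (span_singleton_le_iff_mem _ _).2 (mem_orthogonal_singleton_iff_inner_left.2 h)
  simp only [reflection_orthogonal_apply (K := ℝ ∙ u), map_neg,
    reflection_reflection_comm_of_le hle]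

theorem reflection_mem_of_orthonormalBasis {ι : Type*} [Fintype ι] (b : OrthonormalBasis ι ℝ Kᗮ)
    {S : Set E} (hS : ∀ i, ∀ x ∈ S, (ℝ ∙ (b i : E))ᗮ.reflection x ∈ S) {x : E} (hx : x ∈ S) :
    K.reflection x ∈ S := by
  classical
  have hb : Orthonormal ℝ fun i => (b i : E) := b.orthonormal.comp_linearIsometry Kᗮ.subtypeₗᵢ
  -- `K.reflection x = x - 2 ∑ ⟪bᵢ, x⟫ bᵢ`, and each partial sum is one more reflection away.
  suffices ∀ s : Finset ι, x - (2 : ℝ) • ∑ i ∈ s, ⟪(b i : E), x⟫ • (b i : E) ∈ S by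
    convert this Finset.univ using 1
    rw [← neg_neg (K.reflection x), ← reflection_orthogonal_apply, reflection_apply,
      starProjection_apply, b.orthogonalProjectionOnto_apply_eq_sum]
    push_cast
    module
  intro s
  induction s using Finset.induction with
  | empty => simpa using hx
  | insert j s hj ih =>
    convert hS j _ ih using 1
    have hinner :
        ⟪(b j : E), x - (2 : ℝ) • ∑ i ∈ s, ⟪(b i : E), x⟫ • (b i : E)⟫ = ⟪(b j : E), x⟫ := by
      simp [inner_sub_right, inner_smul_right, inner_sum, orthonormal_iff_ite.mp hb, hj]
    rw [reflection_orthogonal_unit_singleton (hb.1 j), hinner, Finset.sum_insert hj]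
    module

end Submodule

theorem inner_add_smul_of_mem_orthogonal {e g : E} (he : ‖e‖ = 1) (hg : g ∈ (ℝ ∙ e)ᗮ)
    (t : ℝ) : ⟪e, g + t • e⟫ = t := by
  rw [inner_add_right, mem_orthogonal_singleton_iff_inner_right.1 hg, real_inner_smul_right,
    real_inner_self_eq_norm_sq, he]
  ring

theorem isCompact_setOf_add_smul_mem {e : E} (he : ‖e‖ = 1) (g : E) {K : Set E}
    (hK : IsCompact K) : IsCompact {t : ℝ | g + t • e ∈ K} := by
  have hiso : Isometry fun t : ℝ => g + t • e := Isometry.of_dist_eq fun s t => by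
    rw [dist_add_left, dist_eq_norm, ← sub_smul, norm_smul, he, mul_one, Real.norm_eq_abs,
      Real.dist_eq]
  exact hiso.isClosedEmbedding.isCompact_preimage hK

theorem Convex.setOf_add_smul_mem {K : Set E} (hK : Convex ℝ K) (g e : E) :
    Convex ℝ {t : ℝ | g + t • e ∈ K} := by
  have h : {t : ℝ | g + t • e ∈ K} = AffineMap.lineMap g (g + e) ⁻¹' K := by
    ext t; simp [AffineMap.lineMap_apply, add_comm]
  rw [h]
  exact hK.affine_preimage _

end InnerProductSpace

theorem Real.volume_inv_two_smul_sub_self {A : Set ℝ} (hA : IsCompact A) (hA' : Convex ℝ A) :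
    volume ((2⁻¹ : ℝ) • (A - A)) = volume A := by
  rcases A.eq_empty_or_nonempty with rfl | hne
  · simp
  obtain ⟨a, b, hab, rfl⟩ : ∃ a b, a ≤ b ∧ A = Set.Icc a b :=
    ⟨_, _, Real.sInf_le_sSup A hA.bddBelow hA.bddAbove,
      eq_Icc_of_connected_compact ⟨hne, hA'.isPreconnected⟩ hA⟩
  have hsub : Set.Icc a b - Set.Icc a b = Set.Icc (a - b) (b - a) := by
    refine Set.Subset.antisymm ?_ fun s ⟨hs₁, hs₂⟩ => ?_
    · rintro _ ⟨x, ⟨hx₁, hx₂⟩, y, ⟨hy₁, hy₂⟩, rfl⟩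
      exact ⟨by linarith, by linarith⟩
    rcases le_total 0 s with hs | hs
    · exact ⟨a + s, ⟨by linarith, by linarith⟩, a, ⟨le_rfl, hab⟩, by ring⟩
    · exact ⟨a, ⟨le_rfl, hab⟩, a - s, ⟨by linarith, by linarith⟩, by ring⟩
  rw [hsub, LinearOrderedField.smul_Icc (by norm_num), Real.volume_Icc, Real.volume_Icc]
  congr 1
  ring

section Cavalieri

variable {E : Type*} [NormedAddCommGroup E] [InnerProductSpace ℝ E] [FiniteDimensional ℝ E]
  [MeasurableSpace E] [BorelSpace E]

theorem volume_eq_of_volume_slices_eq {e : E} (he : ‖e‖ = 1) {S T : Set E}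
    (hS : MeasurableSet S) (hT : MeasurableSet T)
    (h : ∀ g ∈ (ℝ ∙ e)ᗮ, volume {t : ℝ | g + t • e ∈ S} = volume {t : ℝ | g + t • e ∈ T}) :
    volume S = volume T := by
  let ψ : WithLp 2 (ℝ × (ℝ ∙ e)ᗮ) ≃ₗᵢ[ℝ] E :=
    (LinearIsometryEquiv.withLpProdCongr 2 (LinearIsometryEquiv.toSpanUnitSingleton e he)
      (LinearIsometryEquiv.refl ℝ _)).trans (ℝ ∙ e).orthogonalDecomposition.symm
  have hψ : ∀ t (g : (ℝ ∙ e)ᗮ), ψ (WithLp.toLp 2 (t, g)) = g + t • e := by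
    intro t g
    simp [ψ, add_comm]
  have slices : ∀ U, MeasurableSet U →
      volume U = ∫⁻ g : (ℝ ∙ e)ᗮ, volume {t : ℝ | (g : E) + t • e ∈ U} := by
    intro U hU
    have hmp := ψ.measurePreserving.comp (WithLp.volume_preserving_toLp ℝ (ℝ ∙ e)ᗮ)
    rw [← hmp.measure_preimage hU.nullMeasurableSet, Measure.volume_eq_prod,
      Measure.prod_apply_symm (hmp.measurable hU)]
    simp only [Set.preimage, Function.comp_apply, hψ, Set.mem_ofPred_eq]
  rw [slices S hS, slices T hT]
  exact lintegral_congr fun g => h g g.2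

end Cavalieri

section Fiber

variable {n : ℕ} {H : Submodule ℝ (Euc n)} {K : Set (Euc n)}

theorem mem_fiber_iff {z : Euc n} :
    z ∈ fiber H K ↔ ∃ a ∈ K, ∃ b ∈ K, a - b ∈ Hᗮ ∧ (2⁻¹ : ℝ) • (a + H.reflection b) = z := by
  have coset : ∀ x a : Euc n, a ∈ (Hᗮ : Set (Euc n)) + {x} ↔ a - x ∈ Hᗮ := by
    simp [Set.add_singleton, sub_eq_add_neg]
  simp only [fiber, Set.mem_iUnion, Set.mem_smul_set, Set.mem_add, Set.mem_image,
    Set.mem_inter_iff, coset, reflMap, exists_prop]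
  constructor
  · rintro ⟨x, -, _, ⟨a, ⟨ha, hax⟩, _, ⟨b, ⟨hb, hbx⟩, rfl⟩, rfl⟩, rfl⟩
    exact ⟨a, ha, b, hb, by simpa using sub_mem hax hbx, rfl⟩
  · rintro ⟨a, ha, b, hb, hab, rfl⟩
    have hbx : b - H.starProjection a ∈ Hᗮ := by
      simpa using sub_mem (sub_starProjection_mem_orthogonal (K := H) a) hab
    exact ⟨_, starProjection_apply_mem H a, _,
      ⟨a, ⟨ha, sub_starProjection_mem_orthogonal a⟩, _, ⟨b, ⟨hb, hbx⟩, rfl⟩, rfl⟩, rfl⟩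

variable (H) in
def fiberSymmMap : Euc n × Euc n →ₗ[ℝ] Euc n :=
  (2⁻¹ : ℝ) • (LinearMap.fst ℝ _ _ + H.reflection.toLinearMap ∘ₗ LinearMap.snd ℝ _ _)

variable (H) in
def sameFiber : Submodule ℝ (Euc n × Euc n) :=
  Hᗮ.comap (LinearMap.fst ℝ _ _ - LinearMap.snd ℝ _ _)

theorem fiber_eq_image : fiber H K = fiberSymmMap H '' (K ×ˢ K ∩ sameFiber H) := by
  ext z
  simp [mem_fiber_iff, fiberSymmMap, sameFiber, and_assoc]

theorem convex_fiber (hK : Convex ℝ K) : Convex ℝ (fiber H K) := by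
  rw [fiber_eq_image]
  exact ((hK.prod hK).inter (sameFiber H).convex).linear_image _

theorem isCompact_fiber (hK : IsCompact K) : IsCompact (fiber H K) := by
  rw [fiber_eq_image]
  exact ((hK.prod hK).inter_right (sameFiber H).closed_of_finiteDimensional).image
    (fiberSymmMap H).continuous_of_finiteDimensional

theorem fiber_mono {K' : Set (Euc n)} (h : K ⊆ K') : fiber H K ⊆ fiber H K' := by
  simp only [Set.subset_def, mem_fiber_iff]
  rintro _ ⟨a, ha, b, hb, hab, rfl⟩
  exact ⟨a, h ha, b, h hb, hab, rfl⟩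

theorem subset_fiber_of_reflection_mem (hK : ∀ x ∈ K, H.reflection x ∈ K) :
    K ⊆ fiber H K := fun x hx =>
  mem_fiber_iff.2 ⟨x, hx, H.reflection x, hK x hx, sub_reflection_mem_orthogonal H x, by
    rw [reflection_reflection]; module⟩

theorem reflection_mem_fiber {z : Euc n} (hz : z ∈ fiber H K) : H.reflection z ∈ fiber H K := by
  obtain ⟨a, ha, b, hb, hab, rfl⟩ := mem_fiber_iff.1 hz
  refine mem_fiber_iff.2 ⟨b, hb, a, ha, by simpa using neg_mem hab, ?_⟩
  rw [map_smul, map_add, reflection_reflection, add_comm]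

theorem apply_mem_fiber {F : Type*} [FunLike F (Euc n) (Euc n)]
    [LinearMapClass F ℝ (Euc n) (Euc n)]
    {φ : F} (hφ : ∀ x, φ (H.reflection x) = H.reflection (φ x))
    (hK : ∀ x ∈ K, φ x ∈ K) {z : Euc n} (hz : z ∈ fiber H K) : φ z ∈ fiber H K := by
  obtain ⟨a, ha, b, hb, hab, rfl⟩ := mem_fiber_iff.1 hz
  refine mem_fiber_iff.2 ⟨φ a, hK a ha, φ b, hK b hb, ?_, by rw [map_smul, map_add, hφ]⟩
  rw [← map_sub, ← reflection_eq_neg_iff, ← hφ, (reflection_eq_neg_iff H).2 hab, map_neg]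

theorem fiber_fiber_subset_of_le {L : Submodule ℝ (Euc n)} (hHL : H ≤ L) :
    fiber H (fiber L K) ⊆ fiber L (fiber H K) := by
  intro z hz
  obtain ⟨a, ha, b, hb, hab, rfl⟩ := mem_fiber_iff.1 hz
  obtain ⟨p₁, hp₁, p₂, hp₂, hp, rfl⟩ := mem_fiber_iff.1 ha
  obtain ⟨q₁, hq₁, q₂, hq₂, hq, rfl⟩ := mem_fiber_iff.1 hb
  have hLH : Lᗮ ≤ Hᗮ := orthogonal_le hHL
  have hpq₁ : p₁ - q₁ ∈ Hᗮ := by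
    have := add_mem (sub_mem hab (hLH (inv_two_smul_add_reflection_sub_mem_orthogonal hp)))
      (hLH (inv_two_smul_add_reflection_sub_mem_orthogonal hq))
    convert this using 1; module
  have hpq₂ : p₂ - q₂ ∈ Hᗮ := by
    convert sub_mem (add_mem hpq₁ (hLH hq)) (hLH hp) using 1; abel
  have hRq : H.reflection (q₁ - q₂) = -(q₁ - q₂) := (reflection_eq_neg_iff H).2 (hLH hq)
  refine mem_fiber_iff.2 ⟨_, mem_fiber_iff.2 ⟨p₁, hp₁, q₁, hq₁, hpq₁, rfl⟩,
    _, mem_fiber_iff.2 ⟨p₂, hp₂, q₂, hq₂, hpq₂, rfl⟩, ?_, ?_⟩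
  · have e : (2⁻¹ : ℝ) • (p₁ + H.reflection q₁) - (2⁻¹ : ℝ) • (p₂ + H.reflection q₂) =
        (2⁻¹ : ℝ) • ((p₁ - p₂) + H.reflection (q₁ - q₂)) := by
      rw [map_sub]; module
    rw [e, hRq, ← sub_eq_add_neg]
    exact smul_mem _ _ (sub_mem hp hq)
  · simp only [map_smul, map_add, reflection_reflection_comm_of_le hHL]
    module

theorem setOf_add_smul_mem_fiber {e g : Euc n} (he : ‖e‖ = 1) (hg : g ∈ (ℝ ∙ e)ᗮ) :
    {t : ℝ | g + t • e ∈ fiber (ℝ ∙ e)ᗮ K} =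
      (2⁻¹ : ℝ) • ({t : ℝ | g + t • e ∈ K} - {t : ℝ | g + t • e ∈ K}) := by
  have hinner := inner_add_smul_of_mem_orthogonal he hg
  ext s
  simp only [Set.mem_ofPred_eq, mem_fiber_iff, Set.mem_smul_set, Set.mem_sub,
    orthogonal_orthogonal, mem_span_singleton, reflection_orthogonal_unit_singleton he]
  constructor
  · rintro ⟨a, ha, b, hb, ⟨c, hc⟩, hz⟩
    have hct : c = ⟪e, a⟫ - ⟪e, b⟫ := by
      simpa [inner_sub_right, real_inner_smul_right, real_inner_self_eq_norm_sq, he] using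
        congrArg (⟪e, ·⟫) hc
    have hs : s = c / 2 := by
      have := congrArg (⟪e, ·⟫) hz
      simp only [hinner, inner_smul_right, inner_add_right, inner_sub_right,
        real_inner_self_eq_norm_sq, he] at this
      rw [← this, hct]; ring
    have hb' : b = g + ⟪e, b⟫ • e := by
      linear_combination (norm := module) hz + (2⁻¹ : ℝ) • hc + hs • e
    have ha' : a = g + ⟪e, a⟫ • e := by
      linear_combination (norm := module) hb' - hc + hct • e
    exact ⟨_, ⟨_, ha' ▸ ha, _, hb' ▸ hb, rfl⟩, by rw [hs, hct]; ring⟩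
  · rintro ⟨_, ⟨t₁, ht₁, t₂, ht₂, rfl⟩, rfl⟩
    refine ⟨_, ht₁, _, ht₂, ⟨t₁ - t₂, by module⟩, ?_⟩
    rw [hinner]
    module

theorem volume_fiber_orthogonal_singleton {e : Euc n} (he : ‖e‖ = 1)
    (hK : IsCompact K) (hK' : Convex ℝ K) : volume (fiber (ℝ ∙ e)ᗮ K) = volume K := by
  refine volume_eq_of_volume_slices_eq he (isCompact_fiber hK).measurableSet hK.measurableSet
    fun g hg => ?_
  rw [setOf_add_smul_mem_fiber he hg]
  exact Real.volume_inv_two_smul_sub_self (isCompact_setOf_add_smul_mem he g hK)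
    (hK'.setOf_add_smul_mem g e)

def fiberAlong (l : List (Euc n)) (K : Set (Euc n)) : Set (Euc n) :=
  l.foldr (fun e S => fiber (ℝ ∙ e)ᗮ S) K

theorem isCompact_fiberAlong (l : List (Euc n)) (hK : IsCompact K) :
    IsCompact (fiberAlong l K) := by
  induction l with
  | nil => exact hK
  | cons e l ih => exact isCompact_fiber ih

theorem convex_fiberAlong (l : List (Euc n)) (hK : Convex ℝ K) : Convex ℝ (fiberAlong l K) := by
  induction l with
  | nil => exact hK
  | cons e l ih => exact convex_fiber ih

theorem volume_fiberAlong {l : List (Euc n)} (hl : ∀ e ∈ l, ‖e‖ = 1) (hK : IsCompact K)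
    (hK' : Convex ℝ K) : volume (fiberAlong l K) = volume K := by
  induction l with
  | nil => rfl
  | cons e l ih =>
    rw [List.forall_mem_cons] at hl
    exact (volume_fiber_orthogonal_singleton hl.1 (isCompact_fiberAlong l hK)
      (convex_fiberAlong l hK')).trans (ih hl.2)

theorem reflection_mem_fiberAlong {l : List (Euc n)} (hl : l.Pairwise fun e f => ⟪e, f⟫ = 0)
    {e : Euc n} (he : e ∈ l) {x : Euc n} (hx : x ∈ fiberAlong l K) :
    (ℝ ∙ e)ᗮ.reflection x ∈ fiberAlong l K := by
  induction l generalizing x with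
  | nil => simp at he
  | cons f l ih =>
    rw [List.pairwise_cons] at hl
    rcases List.mem_cons.1 he with rfl | he
    · exact reflection_mem_fiber hx
    · exact apply_mem_fiber (fun y => (reflection_orthogonal_singleton_comm (hl.1 e he) y).symm)
        (fun y hy => ih hl.2 he hy) hx

theorem fiber_fiberAlong_subset {l : List (Euc n)} (hl : ∀ e ∈ l, e ∈ Hᗮ) :
    fiber H (fiberAlong l K) ⊆ fiberAlong l (fiber H K) := by
  induction l with
  | nil => exact subset_rfl
  | cons e l ih =>
    rw [List.forall_mem_cons] at hl
    have hle : H ≤ (ℝ ∙ e)ᗮ := (le_orthogonal_orthogonal H).trans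
      (orthogonal_le ((span_singleton_le_iff_mem _ _).2 hl.1))
    exact (fiber_fiber_subset_of_le hle).trans (fiber_mono (ih hl.2))

end Fiber

theorem stmt8_general {n : ℕ}
    (H : Submodule ℝ (Euc n))
    (K : Set (Euc n)) (hK : IsConvexBody K) :
    volume K ≤ volume (fiber H K) := by
  obtain ⟨-, hKc, hKv⟩ := hK
  let b := stdOrthonormalBasis ℝ Hᗮ
  have hb : Orthonormal ℝ fun i => (b i : Euc n) := b.orthonormal.comp_linearIsometry Hᗮ.subtypeₗᵢ
  let l := List.ofFn fun i => (b i : Euc n)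
  have hunit : ∀ e ∈ l, ‖e‖ = 1 := List.forall_mem_ofFn_iff.2 hb.1
  have hmem : ∀ e ∈ l, e ∈ Hᗮ := List.forall_mem_ofFn_iff.2 fun i => (b i).2
  have hpair : l.Pairwise fun e f => ⟪e, f⟫ = 0 := List.pairwise_ofFn.2 fun i j hij => hb.2 hij.ne
  have hsymm : ∀ x ∈ fiberAlong l K, H.reflection x ∈ fiberAlong l K := fun x hx =>
    reflection_mem_of_orthonormalBasis b
      (fun i _ hy => reflection_mem_fiberAlong hpair (List.mem_ofFn.2 ⟨i, rfl⟩) hy) hx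
  calc volume K = volume (fiberAlong l K) := (volume_fiberAlong hunit hKc hKv).symm
    _ ≤ volume (fiberAlong l (fiber H K)) :=
      measure_mono ((subset_fiber_of_reflection_mem hsymm).trans (fiber_fiberAlong_subset hmem))
    _ = volume (fiber H K) := volume_fiberAlong hunit (isCompact_fiber hKc) (convex_fiber hKv)

/-- Fiber symmetrization does not decrease the Lebesgue measure of a convex body. -/
theorem stmt8 {n : ℕ} (hn : 2 ≤ n)
    (H : Submodule ℝ (Euc n)) (hb : H ≠ ⊥) (ht : H ≠ ⊤)
    (K : Set (Euc n)) (hK : IsConvexBody K) :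
    volume K ≤ volume (fiber H K) :=
  stmt8_general H K hK
end
end

section
/- Let n ≥ 2, let (H_m)_{m≥1} be a sequence of hyperplanes through the origin in ℝⁿ with unit normals (u_m), and let ♢ be a symmetrization on 𝒦ⁿ belonging to the family ℱ. Suppose the angles α_m ∈ [0, π/2] defined by |u_m · u_{m−1}| = cos α_m satisfy Σ_m α_m < ∞. Then the sequence of hyperplanes (H_m) converges (the orthogonal reflections R_{H_m} converge in operator norm) and (H_m) is ♢-stable on 𝒦ⁿ, i.e. for every k ≥ 1 and every K ∈ 𝒦ⁿ the sequence (♢_{H_m} ∘ ⋯ ∘ ♢_{H_k})(K), m ≥ k, converges in the Hausdorff metric. -/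
open Filter Topology Metric Set Pointwise MeasureTheory

noncomputable section

/-- The orthogonal reflection in `H` as a continuous linear map. -/
def reflCLM {n : ℕ} (H : Submodule ℝ (Euc n)) : Euc n →L[ℝ] Euc n :=
  (H.reflection).toLinearIsometry.toContinuousLinearMap

/-- `iterSeq T k K j = T_{k+j} ∘ ⋯ ∘ T_k` applied to `K`. -/
def iterSeq {n : ℕ} (T : ℕ → Set (Euc n) → Set (Euc n)) (k : ℕ) (K : Set (Euc n)) :
    ℕ → Set (Euc n)
  | 0 => T k K
  | j + 1 => T (k + j + 1) (iterSeq T k K j)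

structure IsInF {n : ℕ} (D : Submodule ℝ (Euc n) → Set (Euc n) → Set (Euc n)) : Prop where
  body : ∀ ⦃H : Submodule ℝ (Euc n)⦄, H ≠ ⊥ → H ≠ ⊤ → ∀ ⦃K⦄, IsConvexBody K →
    IsConvexBody (D H K)
  symmetric : ∀ ⦃H : Submodule ℝ (Euc n)⦄, H ≠ ⊥ → H ≠ ⊤ → ∀ ⦃K⦄, IsConvexBody K →
    reflMap H '' D H K = D H K
  mono : ∀ ⦃H : Submodule ℝ (Euc n)⦄, H ≠ ⊥ → H ≠ ⊤ → ∀ ⦃K L⦄, IsConvexBody K →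
    IsConvexBody L → K ⊆ L → D H K ⊆ D H L
  transInv : ∀ ⦃H : Submodule ℝ (Euc n)⦄, H ≠ ⊥ → H ≠ ⊤ → ∀ ⦃K⦄, IsConvexBody K →
    reflMap H '' K = K → ∀ x ∈ Hᗮ, D H (K + {x}) = K
  inv : ∀ ⦃H : Submodule ℝ (Euc n)⦄, H ≠ ⊥ → H ≠ ⊤ → ∀ ⦃K⦄, IsConvexBody K →
    reflMap H '' K = K → D H K = K

/-!
If unit normals `a`, `b` satisfy `|⟪a, b⟫| = cos t`, the reflections in `a^⊥` and `b^⊥` differ by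
at most `4|t|` in operator norm, so summable angles make the reflections a Cauchy sequence.

For the symmetrizations, all iterates stay in a ball of radius `ρ` around `0` containing `K`. The
`j`-th iterate is symmetric in `H_{k+j}`, so it lies in the `H_{k+j+1}`-symmetric convex body
`Q ∩ R⁻¹ Q`, where `Q` is its closed `4ρ|α_{k+j+1}|`-thickening and `R` the reflection in
`H_{k+j+1}`; monotonicity and invariance then put the next iterate inside `Q`. A bounded
sequence of sets whose growth per step is summable converges in the Hausdorff metric to its
upper limit `⋂ m, closure (⋃ j, A (m + j))`.
-/

open scoped InnerProductSpace

section Reflection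

variable {E : Type*} [NormedAddCommGroup E] [InnerProductSpace ℝ E]

theorem reflection_orthogonal_span_unit_apply {a : E} (ha : ‖a‖ = 1) (x : E) :
    (ℝ ∙ a)ᗮ.reflection x = x - (2 * ⟪a, x⟫_ℝ) • a := by
  rw [Submodule.reflection_apply, Submodule.starProjection_orthogonal_val,
    Submodule.starProjection_unit_singleton ℝ ha]
  module

theorem norm_reflection_sub_reflection_le {a b : E} (ha : ‖a‖ = 1) (hb : ‖b‖ = 1) (x : E) :
    ‖(ℝ ∙ a)ᗮ.reflection x - (ℝ ∙ b)ᗮ.reflection x‖ ≤ 4 * ‖a - b‖ * ‖x‖ := by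
  have hba : |⟪b - a, x⟫_ℝ| ≤ ‖a - b‖ * ‖x‖ := norm_sub_rev b a ▸ abs_real_inner_le_norm _ _
  have hax : |⟪a, x⟫_ℝ| ≤ ‖x‖ := by simpa [ha] using abs_real_inner_le_norm a x
  calc ‖(ℝ ∙ a)ᗮ.reflection x - (ℝ ∙ b)ᗮ.reflection x‖
      = ‖(2 * ⟪b - a, x⟫_ℝ) • b + (2 * ⟪a, x⟫_ℝ) • (b - a)‖ := by
        rw [reflection_orthogonal_span_unit_apply ha, reflection_orthogonal_span_unit_apply hb,
          inner_sub_left]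
        congr 1
        module
    _ ≤ 2 * |⟪b - a, x⟫_ℝ| * ‖b‖ + 2 * |⟪a, x⟫_ℝ| * ‖b - a‖ := by
        grw [norm_add_le]
        simp [norm_smul]
    _ ≤ 4 * ‖a - b‖ * ‖x‖ := by
        rw [hb, norm_sub_rev]
        nlinarith [norm_nonneg (a - b)]

theorem norm_sub_le_abs_of_inner_eq_cos {a b : E} (ha : ‖a‖ = 1) (hb : ‖b‖ = 1) {t : ℝ}
    (h : ⟪a, b⟫_ℝ = Real.cos t) : ‖a - b‖ ≤ |t| := by
  have hsq : ‖a - b‖ ^ 2 ≤ t ^ 2 := by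
    rw [norm_sub_sq_real, ha, hb, h]
    nlinarith [Real.one_sub_sq_div_two_le_cos (x := t)]
  simpa using sq_le_sq.1 hsq

theorem norm_reflection_sub_reflection_le_of_abs_inner_eq_cos {a b : E} (ha : ‖a‖ = 1)
    (hb : ‖b‖ = 1) {t : ℝ} (h : |⟪a, b⟫_ℝ| = Real.cos t) (x : E) :
    ‖(ℝ ∙ a)ᗮ.reflection x - (ℝ ∙ b)ᗮ.reflection x‖ ≤ 4 * |t| * ‖x‖ := by
  rcases abs_choice ⟪a, b⟫_ℝ with hab | hab
  · grw [norm_reflection_sub_reflection_le ha hb,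
      norm_sub_le_abs_of_inner_eq_cos ha hb (hab ▸ h)]
  · have hb' : ‖-b‖ = 1 := by rwa [norm_neg]
    have hneg : (ℝ ∙ b)ᗮ.reflection x = (ℝ ∙ -b)ᗮ.reflection x := by
      rw [reflection_orthogonal_span_unit_apply hb, reflection_orthogonal_span_unit_apply hb']
      simp
    rw [hneg]
    grw [norm_reflection_sub_reflection_le ha hb',
      norm_sub_le_abs_of_inner_eq_cos ha hb' (by rw [inner_neg_right, ← hab, h])]

theorem orthogonal_span_singleton_ne_top {w : E} (hw : w ≠ 0) : (ℝ ∙ w)ᗮ ≠ ⊤ := by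
  rw [Ne, Submodule.orthogonal_eq_top_iff, Submodule.span_singleton_eq_bot]
  exact hw

theorem orthogonal_span_singleton_ne_bot [FiniteDimensional ℝ E]
    (hE : 2 ≤ Module.finrank ℝ E) (w : E) : (ℝ ∙ w)ᗮ ≠ ⊥ := by
  rw [Ne, Submodule.orthogonal_eq_bot_iff]
  intro htop
  have := finrank_span_le_card (R := ℝ) ({w} : Set E)
  rw [htop, finrank_top] at this
  simp at this
  omega

end Reflection

theorem norm_reflCLM_sub_le_of_abs_inner_eq_cos {n : ℕ} {a b : Euc n} (ha : ‖a‖ = 1)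
    (hb : ‖b‖ = 1) {t : ℝ} (h : |⟪a, b⟫_ℝ| = Real.cos t) :
    ‖reflCLM (ℝ ∙ a)ᗮ - reflCLM (ℝ ∙ b)ᗮ‖ ≤ 4 * |t| :=
  ContinuousLinearMap.opNorm_le_bound _ (by positivity)
    (norm_reflection_sub_reflection_le_of_abs_inner_eq_cos ha hb h)

theorem exists_tendsto_of_dist_succ_le_of_summable {X : Type*} [PseudoMetricSpace X]
    [CompleteSpace X] {f : ℕ → X} {d : ℕ → ℝ} (k : ℕ)
    (hf : ∀ m, k ≤ m → dist (f m) (f (m + 1)) ≤ d m) (hd : Summable d) :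
    ∃ x, Tendsto f atTop (𝓝 x) := by
  have hcauchy : CauchySeq fun i => f (i + k) :=
    cauchySeq_of_dist_le_of_summable (fun i => d (i + k))
      (fun i => by simpa [add_right_comm] using hf (i + k) (by omega))
      ((summable_nat_add_iff k).2 hd)
  obtain ⟨x, hx⟩ := cauchySeq_tendsto_of_complete hcauchy
  exact ⟨x, (tendsto_add_atTop_iff_nat k).1 hx⟩

section Hausdorff

variable {X : Type*} [MetricSpace X]

theorem tendsto_hausdorffDist_iInter_of_antitone {B : ℕ → Set X} (hB : Antitone B)
    (hcpt : ∀ m, IsCompact (B m)) :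
    Tendsto (fun m => hausdorffDist (B m) (⋂ m, B m)) atTop (𝓝 0) := by
  rw [Metric.tendsto_atTop]
  intro ε hε
  obtain ⟨N, hN⟩ := exists_subset_nhds_of_isCompact' hB.directed_ge hcpt
    (fun m => (hcpt m).isClosed) (U := thickening (ε / 2) (⋂ m, B m))
    (fun x hx => isOpen_thickening.mem_nhds (self_subset_thickening (half_pos hε) _ hx))
  refine ⟨N, fun m hm => ?_⟩
  have hle : hausdorffDist (B m) (⋂ m, B m) ≤ ε / 2 := by
    refine hausdorffDist_le_of_mem_dist (half_pos hε).le (fun x hx => ?_)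
      (fun y hy => ⟨y, mem_iInter.1 hy m, by simpa using (half_pos hε).le⟩)
    obtain ⟨z, hz, hxz⟩ := mem_thickening_iff.1 (hN (hB hm hx))
    exact ⟨z, hz, hxz.le⟩
  rw [Real.dist_0_eq_abs, abs_of_nonneg hausdorffDist_nonneg]
  linarith

theorem exists_tendsto_hausdorffDist_of_subset_cthickening {A : ℕ → Set X} {C : Set X}
    (hC : IsCompact C) (hAC : ∀ j, A j ⊆ C) (hne : ∀ j, (A j).Nonempty) {δ : ℕ → ℝ}
    (hδ0 : ∀ j, 0 ≤ δ j) (hδ : Summable δ) (hstep : ∀ j, A (j + 1) ⊆ cthickening (δ j) (A j)) :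
    ∃ L : Set X, L.Nonempty ∧ IsCompact L ∧
      Tendsto (fun j => hausdorffDist (A j) L) atTop (𝓝 0) := by
  set t : ℕ → ℝ := fun m => ∑' i, δ (i + m)
  have ht0 : ∀ m, 0 ≤ t m := fun m => tsum_nonneg fun i => hδ0 _
  have hchain : ∀ m j, A (m + j) ⊆ cthickening (t m) (A m) := by
    intro m j
    suffices A (m + j) ⊆ cthickening (∑ i ∈ Finset.range j, δ (i + m)) (A m) from
      this.trans <| cthickening_mono
        (((summable_nat_add_iff m).2 hδ).sum_le_tsum _ fun i _ => hδ0 _) _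
    induction j with
    | zero => exact self_subset_cthickening (A m)
    | succ j ih =>
      calc A (m + (j + 1)) ⊆ cthickening (δ (j + m)) (A (m + j)) := by
            rw [add_comm j m]; exact hstep (m + j)
        _ ⊆ cthickening (δ (j + m)) (cthickening (∑ i ∈ Finset.range j, δ (i + m)) (A m)) :=
            cthickening_subset_of_subset _ ih
        _ ⊆ cthickening (∑ i ∈ Finset.range (j + 1), δ (i + m)) (A m) :=
            (cthickening_cthickening_subset (hδ0 _) (Finset.sum_nonneg fun i _ => hδ0 _) _).trans_eq
              (by rw [Finset.sum_range_succ, add_comm])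
  set B : ℕ → Set X := fun m => closure (⋃ j, A (m + j))
  have hAB : ∀ m, A m ⊆ B m := fun m =>
    (subset_iUnion (fun j => A (m + j)) 0).trans subset_closure
  have hBcpt : ∀ m, IsCompact (B m) := fun m =>
    hC.closure_of_subset (iUnion_subset fun j => hAC _)
  have hBanti : Antitone B := antitone_nat_of_succ_le fun m => closure_mono <|
    iUnion_subset fun j => (subset_iUnion _ (j + 1)).trans_eq' (by rw [Nat.add_right_comm]; rfl)
  have hBA : ∀ m, B m ⊆ cthickening (t m) (A m) := fun m =>
    closure_minimal (iUnion_subset (hchain m)) isClosed_cthickening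
  have hLne : (⋂ m, B m).Nonempty :=
    IsCompact.nonempty_iInter_of_directed_nonempty_isCompact_isClosed B hBanti.directed_ge
      (fun m => (hne m).mono (hAB m)) hBcpt fun m => (hBcpt m).isClosed
  have hLcpt : IsCompact (⋂ m, B m) :=
    (hBcpt 0).of_isClosed_subset (isClosed_iInter fun m => (hBcpt m).isClosed) (iInter_subset B 0)
  refine ⟨⋂ m, B m, hLne, hLcpt, ?_⟩
  have hlim : Tendsto (fun j => max (hausdorffDist (B j) (⋂ m, B m)) (t j)) atTop (𝓝 0) := by
    simpa using (tendsto_hausdorffDist_iInter_of_antitone hBanti hBcpt).max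
      (tendsto_sum_nat_add δ)
  refine squeeze_zero (fun j => hausdorffDist_nonneg) (fun j => ?_) hlim
  refine hausdorffDist_le_of_infDist (le_max_of_le_right (ht0 j)) (fun x hx => ?_) (fun y hy => ?_)
  · exact le_max_of_le_left <| infDist_le_hausdorffDist_of_mem (hAB j hx) <|
      hausdorffEDist_ne_top_of_nonempty_of_bounded ⟨x, hAB j hx⟩ hLne (hBcpt j).isBounded
        hLcpt.isBounded
  · exact le_max_of_le_right <| ENNReal.toReal_le_of_le_ofReal (ht0 j)
      (mem_cthickening_iff.1 (hBA j (mem_iInter.1 hy j)))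

end Hausdorff

section Symmetrization

variable {n : ℕ} {D : Submodule ℝ (Euc n) → Set (Euc n) → Set (Euc n)}

theorem reflMap_involutive (H : Submodule ℝ (Euc n)) : Function.Involutive (reflMap H) :=
  H.reflection_reflection

theorem reflMap_image_eq_preimage (H : Submodule ℝ (Euc n)) (s : Set (Euc n)) :
    reflMap H '' s = reflMap H ⁻¹' s := by
  rw [reflMap, LinearIsometryEquiv.image_eq_preimage_symm, Submodule.reflection_symm]

theorem reflMap_image_closedBall (H : Submodule ℝ (Euc n)) (ρ : ℝ) :
    reflMap H '' closedBall 0 ρ = closedBall 0 ρ := by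
  rw [reflMap, LinearIsometryEquiv.image_closedBall, map_zero]

theorem IsInF.subset_of_subset_of_image_eq (hD : IsInF D) {H : Submodule ℝ (Euc n)}
    (hbot : H ≠ ⊥) (htop : H ≠ ⊤) {K M : Set (Euc n)} (hK : IsConvexBody K)
    (hM : IsConvexBody M) (hMsym : reflMap H '' M = M) (hKM : K ⊆ M) : D H K ⊆ M :=
  (hD.mono hbot htop hK hM hKM).trans (hD.inv hbot htop hM hMsym).subset

theorem IsInF.subset_cthickening (hD : IsInF D) {H H' : Submodule ℝ (Euc n)} (hbot : H ≠ ⊥)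
    (htop : H ≠ ⊤) {K : Set (Euc n)} (hK : IsConvexBody K) (hsym : reflMap H' '' K = K)
    {δ : ℝ} (hclose : ∀ x ∈ K, dist (reflMap H x) (reflMap H' x) ≤ δ) :
    D H K ⊆ cthickening δ K := by
  set Q := cthickening δ K
  have hKM : K ⊆ Q ∩ reflMap H ⁻¹' Q := fun x hx =>
    ⟨self_subset_cthickening K hx, mem_cthickening_of_dist_le _ _ δ K
      (hsym ▸ mem_image_of_mem _ hx) (hclose x hx)⟩
  have hM : IsConvexBody (Q ∩ reflMap H ⁻¹' Q) :=
    ⟨hK.1.mono hKM,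
      (hK.2.1.cthickening).inter_right (isClosed_cthickening.preimage H.reflection.continuous),
      (hK.2.2.cthickening δ).inter
        ((hK.2.2.cthickening δ).linear_preimage H.reflection.toLinearEquiv.toLinearMap)⟩
  have hMsym : reflMap H '' (Q ∩ reflMap H ⁻¹' Q) = Q ∩ reflMap H ⁻¹' Q := by
    rw [reflMap_image_eq_preimage, preimage_inter, ← preimage_comp,
      (reflMap_involutive H).comp_self, preimage_id, inter_comm]
  exact (hD.subset_of_subset_of_image_eq hbot htop hK hM hMsym hKM).trans inter_subset_left

theorem isConvexBody_iterSeq (hD : IsInF D) {H : ℕ → Submodule ℝ (Euc n)} {k : ℕ}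
    (hH : ∀ m, k ≤ m → H m ≠ ⊥ ∧ H m ≠ ⊤) {K : Set (Euc n)} (hK : IsConvexBody K) :
    ∀ j, IsConvexBody (iterSeq (fun m => D (H m)) k K j)
  | 0 => hD.body (hH k le_rfl).1 (hH k le_rfl).2 hK
  | j + 1 => hD.body (hH _ (by omega)).1 (hH _ (by omega)).2 (isConvexBody_iterSeq hD hH hK j)

theorem reflMap_image_iterSeq (hD : IsInF D) {H : ℕ → Submodule ℝ (Euc n)} {k : ℕ}
    (hH : ∀ m, k ≤ m → H m ≠ ⊥ ∧ H m ≠ ⊤) {K : Set (Euc n)} (hK : IsConvexBody K) :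
    ∀ j, reflMap (H (k + j)) '' iterSeq (fun m => D (H m)) k K j =
      iterSeq (fun m => D (H m)) k K j
  | 0 => hD.symmetric (hH k le_rfl).1 (hH k le_rfl).2 hK
  | j + 1 => hD.symmetric (hH _ (by omega)).1 (hH _ (by omega)).2 (isConvexBody_iterSeq hD hH hK j)

theorem iterSeq_subset_of_subset (hD : IsInF D) {H : ℕ → Submodule ℝ (Euc n)} {k : ℕ}
    (hH : ∀ m, k ≤ m → H m ≠ ⊥ ∧ H m ≠ ⊤) {K M : Set (Euc n)} (hK : IsConvexBody K)
    (hM : IsConvexBody M) (hMsym : ∀ m, k ≤ m → reflMap (H m) '' M = M) (hKM : K ⊆ M) :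
    ∀ j, iterSeq (fun m => D (H m)) k K j ⊆ M
  | 0 => hD.subset_of_subset_of_image_eq (hH k le_rfl).1 (hH k le_rfl).2 hK hM
      (hMsym k le_rfl) hKM
  | j + 1 => hD.subset_of_subset_of_image_eq (hH _ (by omega)).1 (hH _ (by omega)).2
      (isConvexBody_iterSeq hD hH hK j) hM (hMsym _ (by omega))
      (iterSeq_subset_of_subset hD hH hK hM hMsym hKM j)

theorem iterSeq_succ_subset_cthickening (hD : IsInF D) {H : ℕ → Submodule ℝ (Euc n)} {k : ℕ}
    (hH : ∀ m, k ≤ m → H m ≠ ⊥ ∧ H m ≠ ⊤) {K : Set (Euc n)} (hK : IsConvexBody K) {ρ c : ℝ}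
    {j : ℕ} (hρ : iterSeq (fun m => D (H m)) k K j ⊆ closedBall 0 ρ)
    (hc : ‖reflCLM (H (k + j + 1)) - reflCLM (H (k + j))‖ ≤ c) :
    iterSeq (fun m => D (H m)) k K (j + 1) ⊆
      cthickening (c * ρ) (iterSeq (fun m => D (H m)) k K j) := by
  refine hD.subset_cthickening (hH _ (by omega)).1 (hH _ (by omega)).2
    (isConvexBody_iterSeq hD hH hK j) (reflMap_image_iterSeq hD hH hK j) fun x hx => ?_
  calc dist (reflMap (H (k + j + 1)) x) (reflMap (H (k + j)) x)
      = ‖(reflCLM (H (k + j + 1)) - reflCLM (H (k + j))) x‖ := dist_eq_norm _ _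
    _ ≤ c * ‖x‖ := (ContinuousLinearMap.le_opNorm _ x).trans (by gcongr)
    _ ≤ c * ρ := by
        gcongr
        · exact (norm_nonneg _).trans hc
        · exact mem_closedBall_zero_iff.1 (hρ hx)

end Symmetrization

theorem stmt13_general {n : ℕ} (hn : 2 ≤ n)
    (u : ℕ → Euc n) (hu : ∀ m, 1 ≤ m → ‖u m‖ = 1)
    (D : Submodule ℝ (Euc n) → Set (Euc n) → Set (Euc n)) (hD : IsInF D)
    (α : ℕ → ℝ)
    (hangle : ∀ m, 2 ≤ m → |(inner ℝ (u m) (u (m - 1)) : ℝ)| = Real.cos (α m))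
    (hsum : Summable α) :
    (∃ T : Euc n →L[ℝ] Euc n, Tendsto (fun m => reflCLM ((ℝ ∙ u m)ᗮ)) atTop (𝓝 T)) ∧
      (∀ k, 1 ≤ k → ∀ K : Set (Euc n), IsConvexBody K →
        ∃ L : Set (Euc n), L.Nonempty ∧ IsCompact L ∧
          Tendsto (fun j => hausdorffDist (iterSeq (fun m => D ((ℝ ∙ u m)ᗮ)) k K j) L)
            atTop (𝓝 0)) := by
  have hstep : ∀ m, 1 ≤ m →
      ‖reflCLM (ℝ ∙ u (m + 1))ᗮ - reflCLM (ℝ ∙ u m)ᗮ‖ ≤ 4 * |α (m + 1)| := fun m hm =>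
    norm_reflCLM_sub_le_of_abs_inner_eq_cos (hu _ (by omega)) (hu m hm)
      (by simpa using hangle (m + 1) (by omega))
  refine ⟨exists_tendsto_of_dist_succ_le_of_summable 1
    (fun m hm => (dist_comm _ _).trans_le ((dist_eq_norm _ _).trans_le (hstep m hm)))
    (((summable_nat_add_iff 1).2 hsum.abs).mul_left 4), fun k hk K hK => ?_⟩
  obtain ⟨ρ, hKρ⟩ := hK.2.1.isBounded.subset_closedBall 0
  have hρ : 0 ≤ ρ := nonempty_closedBall.1 (hK.1.mono hKρ)
  have hH : ∀ m, k ≤ m → (ℝ ∙ u m)ᗮ ≠ ⊥ ∧ (ℝ ∙ u m)ᗮ ≠ ⊤ := fun m hm =>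
    ⟨orthogonal_span_singleton_ne_bot (by simpa using hn) _,
      orthogonal_span_singleton_ne_top (norm_ne_zero_iff.1 (by simp [hu m (hk.trans hm)]))⟩
  have hS := iterSeq_subset_of_subset hD hH hK
    ⟨nonempty_closedBall.2 hρ, isCompact_closedBall 0 ρ, convex_closedBall 0 ρ⟩
    (fun m _ => reflMap_image_closedBall _ ρ) hKρ
  have hδ : Summable fun j => 4 * |α (k + j + 1)| * ρ :=
    ((hsum.abs.comp_injective fun i j h => by simpa using h).mul_left 4).mul_right ρ
  exact exists_tendsto_hausdorffDist_of_subset_cthickening (isCompact_closedBall 0 ρ) hS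
    (fun j => (isConvexBody_iterSeq hD hH hK j).1) (fun j => by positivity) hδ
    (fun j => iterSeq_succ_subset_cthickening hD hH hK (hS j) (hstep _ (by omega)))

/-- If the angles `α_m ∈ [0, π/2]` between consecutive unit normals `u_m`, given by
`|u_m · u_{m-1}| = cos α_m`, are summable, then the hyperplanes `H_m = u_m^⊥` converge
(their reflections converge in operator norm) and `(H_m)` is `D`-stable on the convex
bodies for every symmetrization `D ∈ ℱ`. -/
theorem stmt13 {n : ℕ} (hn : 2 ≤ n)
    (u : ℕ → Euc n) (hu : ∀ m, 1 ≤ m → ‖u m‖ = 1)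
    (D : Submodule ℝ (Euc n) → Set (Euc n) → Set (Euc n)) (hD : IsInF D)
    (α : ℕ → ℝ) (hα : ∀ m, α m ∈ Icc 0 (Real.pi / 2))
    (hangle : ∀ m, 2 ≤ m → |(inner ℝ (u m) (u (m - 1)) : ℝ)| = Real.cos (α m))
    (hsum : Summable α) :
    (∃ T : Euc n →L[ℝ] Euc n, Tendsto (fun m => reflCLM ((ℝ ∙ u m)ᗮ)) atTop (𝓝 T)) ∧
      (∀ k, 1 ≤ k → ∀ K : Set (Euc n), IsConvexBody K →
        ∃ L : Set (Euc n), L.Nonempty ∧ IsCompact L ∧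
          Tendsto (fun j => hausdorffDist (iterSeq (fun m => D ((ℝ ∙ u m)ᗮ)) k K j) L)
            atTop (𝓝 0)) :=
  stmt13_general hn u hu D hD α hangle hsum
end
end
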